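/- Let R > 0, κ ≥ 0, λ ∈ ℝ, and let h : [0,R] → ℝ be C¹ on [0,R] and C² on (0,R], not identically zero, with h(0) = 0, satisfying −h″(r) − (2/r)h′(r) + (2/r²)h(r) = λ·h(r) for all r ∈ (0,R], and the boundary condition h′(R) = −κ·h(R). Then λ > 0. -/

import Mathlib

open Real Set

/-!
The energy identity obtained by multiplying the equation by `r² h`, in differential form: for
`F r = r² h(r) h'(r)`, along solutions `F' = r² h'² + (2 - λ r²) h²`, which is nonnegative when
`λ ≤ 0`. Then `F` is monotone on `[0, R]` with `F 0 = 0` and `F R = -κ R² h(R)² ≤ 0`, so `F`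
vanishes identically; hence `h h' = 0`, i.e. `h²` is constant, and `h(0) = 0` forces `h = 0`.
-/

noncomputable def radialFlux (h : ℝ → ℝ) (r : ℝ) : ℝ := r ^ 2 * h r * deriv h r

theorem hasDerivAt_radialFlux {h : ℝ → ℝ} {c lam r : ℝ} (hr : 0 < r)
    (hd : DifferentiableAt ℝ h r) (hdd : DifferentiableAt ℝ (deriv h) r)
    (hode : -deriv (deriv h) r - 2 / r * deriv h r + c / r ^ 2 * h r = lam * h r) :
    HasDerivAt (radialFlux h) (r ^ 2 * deriv h r ^ 2 + (c - lam * r ^ 2) * h r ^ 2) r := by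
  have hd2 : deriv (deriv h) r = -(2 / r) * deriv h r + c / r ^ 2 * h r - lam * h r := by
    linarith
  unfold radialFlux
  refine (((hasDerivAt_pow 2 r).fun_mul hd.hasDerivAt).fun_mul hdd.hasDerivAt).congr_deriv ?_
  rw [hd2]
  field_simp
  ring

theorem monotoneOn_radialFlux {h : ℝ → ℝ} {c lam R : ℝ} (hc : 0 ≤ c) (hlam : lam ≤ 0)
    (hd : ∀ r ∈ Icc 0 R, DifferentiableAt ℝ h r) (hcont : ContinuousOn (deriv h) (Icc 0 R))
    (hdd : ∀ r ∈ Ioo 0 R, DifferentiableAt ℝ (deriv h) r)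
    (hode : ∀ r ∈ Ioo 0 R,
      -deriv (deriv h) r - 2 / r * deriv h r + c / r ^ 2 * h r = lam * h r) :
    MonotoneOn (radialFlux h) (Icc 0 R) := by
  have hderiv (r : ℝ) (hr : r ∈ Ioo 0 R) := hasDerivAt_radialFlux hr.1
    (hd r (Ioo_subset_Icc_self hr)) (hdd r hr) (hode r hr)
  have hhcont : ContinuousOn h (Icc 0 R) := fun r hr => (hd r hr).continuousAt.continuousWithinAt
  refine monotoneOn_of_deriv_nonneg (convex_Icc 0 R)
    ((continuousOn_id.pow 2).mul hhcont |>.mul hcont) (fun r hr => ?_) (fun r hr => ?_) <;>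
    rw [interior_Icc] at hr
  · exact (hderiv r hr).differentiableAt.differentiableWithinAt
  · rw [(hderiv r hr).deriv]
    have : 0 ≤ c - lam * r ^ 2 := by nlinarith [sq_nonneg r]
    positivity

theorem eqOn_zero_of_mul_deriv_eq_zero {h : ℝ → ℝ} {a b : ℝ}
    (hd : ∀ x ∈ Icc a b, DifferentiableAt ℝ h x) (ha : h a = 0)
    (hprod : ∀ x ∈ Ico a b, h x * deriv h x = 0) : ∀ x ∈ Icc a b, h x = 0 := by
  have hsq : ∀ x ∈ Icc a b, h x ^ 2 = h a ^ 2 := by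
    refine constant_of_has_deriv_right_zero
      (fun x hx => ((hd x hx).continuousAt.pow 2).continuousWithinAt) fun x hx => ?_
    refine ((hd x (Ico_subset_Icc_self hx)).hasDerivAt.fun_pow 2).hasDerivWithinAt.congr_deriv ?_
    simp [mul_assoc, hprod x hx]
  intro x hx
  simpa [ha] using hsq x hx

theorem stmt15 (R κ lam : ℝ) (hR : 0 < R) (hκ : 0 ≤ κ) (h : ℝ → ℝ)
    (hC1 : (∀ r ∈ Icc (0:ℝ) R, DifferentiableAt ℝ h r) ∧
      ContinuousOn (deriv h) (Icc 0 R))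
    (hC2 : (∀ r ∈ Ioc (0:ℝ) R, DifferentiableAt ℝ (deriv h) r) ∧
      ContinuousOn (deriv (deriv h)) (Ioc 0 R))
    (hne : ∃ r ∈ Icc (0:ℝ) R, h r ≠ 0) (h0 : h 0 = 0)
    (hode : ∀ r ∈ Ioc (0:ℝ) R,
      -deriv (deriv h) r - 2 / r * deriv h r + 2 / r ^ 2 * h r = lam * h r)
    (hbc : deriv h R = -κ * h R) :
    0 < lam := by
  by_contra! hlam
  have hmono := monotoneOn_radialFlux zero_le_two hlam hC1.1 hC1.2
    (fun r hr => hC2.1 r (Ioo_subset_Ioc_self hr)) (fun r hr => hode r (Ioo_subset_Ioc_self hr))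
  have h0mem : (0 : ℝ) ∈ Icc 0 R := left_mem_Icc.2 hR.le
  have hRmem : R ∈ Icc 0 R := right_mem_Icc.2 hR.le
  have hF0 : radialFlux h 0 = 0 := by simp [radialFlux]
  have hFR : radialFlux h R ≤ 0 := by
    have : radialFlux h R = -(κ * (R * h R) ^ 2) := by rw [radialFlux, hbc]; ring
    rw [this, neg_nonpos]
    positivity
  have hF (x : ℝ) (hx : x ∈ Icc 0 R) : radialFlux h x = 0 := by
    linarith [hmono hx hRmem hx.2, hmono h0mem hx hx.1]
  have hprod (x : ℝ) (hx : x ∈ Ico 0 R) : h x * deriv h x = 0 := by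
    rcases hx.1.eq_or_lt with rfl | hpos
    · rw [h0, zero_mul]
    · simpa [radialFlux, mul_assoc, hpos.ne'] using hF x (Ico_subset_Icc_self hx)
  obtain ⟨r, hr, hr0⟩ := hne
  exact hr0 (eqOn_zero_of_mul_deriv_eq_zero hC1.1 h0 hprod r hr)
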